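/- Suppose the random environment is such that the quenched mean M₁ = E_μ(S₁) has the normal distribution N(0, σ₁²) under P, and for P-almost every realization of μ, the centered variable S₁ − E_μ(S₁) has the normal distribution N(0, σ₂²) under P_μ, where σ₁, σ₂ > 0 are constants. Then for every n ≥ 1, the real random variable P_μ( max_{i ≤ n} |n^{−1/2}Sᵢ| ≤ 1 ) (a function of the environment μ) has the same distribution as the random variable P( max_{i ≤ n} |σ₂·B_{i/n} + σ₁·W_{i/n}| ≤ 1 | W ), where B and W are two independent standard Brownian motions started at 0. -/

import Mathlib

open MeasureTheory ProbabilityTheory Filter Set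

noncomputable section

/-- A standard one-dimensional Brownian motion started at `0`, parametrized by `ℝ`
(only its restriction to nonnegative times is constrained). -/
def IsStandardBM {Ω : Type*} [MeasurableSpace Ω] (P : Measure Ω) (B : ℝ → Ω → ℝ) : Prop :=
  (∀ t : ℝ, Measurable (B t)) ∧
  (∀ ω, B 0 ω = 0) ∧
  (∀ ω, Continuous fun t => B t ω) ∧
  (∀ (n : ℕ) (t : ℕ → ℝ), Monotone t → 0 ≤ t 0 →
    iIndepFun
      (fun i : Fin n => fun ω => B (t (i + 1)) ω - B (t i) ω) P) ∧
  (∀ s t : ℝ, 0 ≤ s → s ≤ t →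
    P.map (fun ω => B t ω - B s ω) = gaussianReal 0 (Real.toNNReal (t - s)))

/-- A random walk in a time-dependent i.i.d. random environment.  `Ωe` is the sample
space of environments, `Ωq` the quenched sample space. -/
structure RWre (Ωe Ωq : Type*) [MeasurableSpace Ωe] [MeasurableSpace Ωq] where
  /-- law of the environment -/
  Pe : Measure Ωe
  probPe : IsProbabilityMeasure Pe
  /-- quenched law, given the environment -/
  Pq : Ωe → Measure Ωq
  probPq : ∀ ωe, IsProbabilityMeasure (Pq ωe)
  /-- the environment: a sequence of random probability measures on `ℝ` -/
  env : ℕ → Ωe → Measure ℝ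
  /-- the steps of the walk -/
  X : ℕ → Ωq → ℝ
  measX : ∀ n, Measurable (X n)
  measEnv : ∀ n, Measurable (env n)
  probEnv : ∀ n ωe, IsProbabilityMeasure (env n ωe)
  quenchedLaw : ∀ n ωe, (Pq ωe).map (X n) = env n ωe
  quenchedIndep : ∀ ωe, iIndepFun X (Pq ωe)
  envIndep : iIndepFun env Pe
  envIdent : ∀ n, Pe.map (env n) = Pe.map (env 0)

namespace RWre

variable {Ωe Ωq : Type*} [MeasurableSpace Ωe] [MeasurableSpace Ωq] (R : RWre Ωe Ωq)

/-- the walk: `S n = X 1 + ⋯ + X n` (indexing steps from `0`: `S 1 = X 0` is the paper's `S₁`). -/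
def S (n : ℕ) (ωq : Ωq) : ℝ := ∑ i ∈ Finset.range n, R.X i ωq

/-- quenched mean `Mₙ = E_μ Sₙ` -/
def M (n : ℕ) (ωe : Ωe) : ℝ := ∫ ωq, R.S n ωq ∂(R.Pq ωe)

/-- the centered walk `Uₙ = Sₙ - Mₙ` -/
def U (n : ℕ) (ωe : Ωe) (ωq : Ωq) : ℝ := R.S n ωq - R.M n ωe

/-- quenched variance `ηₙ = E_μ Uₙ²` -/
def eta (n : ℕ) (ωe : Ωe) : ℝ := ∫ ωq, (R.U n ωe ωq) ^ 2 ∂(R.Pq ωe)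

/-- `ζₙ = ∑_{k=1}^n E_μ |U_k - U_{k-1}|^α` -/
def zeta (α : ℝ) (n : ℕ) (ωe : Ωe) : ℝ :=
  ∑ k ∈ Finset.range n, ∫ ωq, |R.U (k + 1) ωe ωq - R.U k ωe ωq| ^ α ∂(R.Pq ωe)

/-- `σ = (E M₁²)^{1/2}` -/
def sigma : ℝ := Real.sqrt (∫ ωe, (R.M 1 ωe) ^ 2 ∂ R.Pe)

end RWre

/-- The broken line through the points `(k, g k)`, `k ∈ ℕ`, evaluated at `s ≥ 0`. -/
def brokenLine (g : ℕ → ℝ) (s : ℝ) : ℝ :=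
  g ⌊s⌋₊ + (s - ⌊s⌋₊) * (g (⌊s⌋₊ + 1) - g ⌊s⌋₊)
/-!
Given the environment, the steps `X k` are independent with laws `env k`, and almost surely
every `env k`, centered at its mean `m k`, is `N(0, σ₂²)`; the means `m k` are i.i.d.
`N(0, σ₁²)`. Hence `P_μ(max_{i ≤ n} |n^{-1/2} Sᵢ| ≤ 1) = Φ(n^{-1/2} m)`, where `Φ(a)`
(`gaussianStayProb`) is the probability that the walk with i.i.d. `N(0, σ₂²/n)` steps plus the
deterministic steps `a k` stays in `[-1, 1]` up to time `n`. Conditionally on `W`, the Brownian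
side is `Φ(a)` for the `W`-increments `a k = σ₁ (W_{(k+1)/n} - W_{k/n})`, which are i.i.d.
`N(0, σ₁²/n)` just like the `n^{-1/2} m k`. The delicate point is measurability in the
environment: the mean and the centered law must be measurable functions of the random
measure, in order to transport almost sure statements from `env 0` to every `env k`.
-/

open scoped NNReal ENNReal

lemma map_fun_eq_pi_of_iIndepFun {Ω ι β : Type*} [MeasurableSpace Ω] [MeasurableSpace β]
    [Fintype ι] {P : Measure Ω} {f : ι → Ω → β} (hf : ∀ i, Measurable (f i))
    (hindep : iIndepFun f P) {ν : Measure β} (hlaw : ∀ i, P.map (f i) = ν) :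
    P.map (fun ω i => f i ω) = Measure.pi fun _ => ν := by
  rw [hindep.map_fun_eq_pi_map fun i => (hf i).aemeasurable]
  simp_rw [hlaw]

lemma gaussianReal_map_const_mul_toNNReal (c s : ℝ) :
    (gaussianReal 0 s.toNNReal).map (c * ·) = gaussianReal 0 (c ^ 2 * s).toNNReal := by
  rw [gaussianReal_map_const_mul, mul_zero, Real.toNNReal_mul (sq_nonneg c),
    Real.toNNReal_of_nonneg (sq_nonneg c)]

/-- Written with lower integrals, so that it is a measurable function of `μ`; it is
`∫ x, x ∂μ` for integrable `μ`. -/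
def measureMean (μ : Measure ℝ) : ℝ :=
  (∫⁻ x, ENNReal.ofReal x ∂μ).toReal - (∫⁻ x, ENNReal.ofReal (-x) ∂μ).toReal

lemma measurable_measureMean : Measurable measureMean :=
  (Measure.measurable_lintegral ENNReal.measurable_ofReal).ennreal_toReal.sub
    (Measure.measurable_lintegral (ENNReal.measurable_ofReal.comp measurable_neg)).ennreal_toReal

lemma measureMean_eq_integral {μ : Measure ℝ} (h : Integrable (fun x : ℝ => x) μ) :
    measureMean μ = ∫ x, x ∂μ := by
  rw [integral_eq_lintegral_pos_part_sub_lintegral_neg_part h, measureMean]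

lemma measureMean_eq_of_map_sub_eq_gaussianReal {μ : Measure ℝ} [IsProbabilityMeasure μ]
    {m : ℝ} {v : ℝ≥0} (h : μ.map (fun x => x - m) = gaussianReal 0 v) :
    measureMean μ = m := by
  have hmeas : Measurable (fun x : ℝ => x - m) := measurable_id.sub_const m
  have hint_centered : Integrable (fun x => x - m) μ := by
    have := (memLp_id_gaussianReal (μ := 0) (v := v) 1).integrable le_rfl
    rw [← h] at this
    exact (integrable_map_measure aestronglyMeasurable_id hmeas.aemeasurable).1 this
  have hint : Integrable (fun x : ℝ => x) μ :=
    (hint_centered.add (integrable_const m)).congr (ae_of_all _ fun x => sub_add_cancel x m)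
  have hcentered : ∫ x, (x - m) ∂μ = 0 :=
    calc ∫ x, (x - m) ∂μ = ∫ y, y ∂(μ.map fun x => x - m) :=
          (integral_map hmeas.aemeasurable aestronglyMeasurable_id).symm
      _ = 0 := by rw [h, integral_id_gaussianReal]
  rw [integral_sub hint (integrable_const m)] at hcentered
  simp only [integral_const, probReal_univ, one_smul] at hcentered
  rw [measureMean_eq_integral hint]
  linarith

lemma iInf_rat_gt_measure_Iic (μ : Measure ℝ) [IsFiniteMeasure μ] (t : ℝ) :
    ⨅ r : {r : ℚ // t < r}, μ (Iic (r : ℝ)) = μ (Iic t) := by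
  obtain ⟨q, hq⟩ := exists_rat_gt t
  rw [← Monotone.measure_iInter]
  · congr with x
    simp only [mem_iInter, mem_Iic, Subtype.forall]
    exact ⟨fun h => le_of_forall_lt_rat_imp_le h, fun h r hr => h.trans hr.le⟩
  · exact fun r r' hrr' => Iic_subset_Iic.2 (by exact_mod_cast hrr')
  · exact fun _ => measurableSet_Iic.nullMeasurableSet
  · exact ⟨⟨q, hq⟩, measure_ne_top μ _⟩

/-- By right continuity this is `μ (Iic t)` for finite `μ`; the infimum over rationals makes
it jointly measurable in `(μ, t)`. -/
def measureIic (p : Measure ℝ × ℝ) : ℝ≥0∞ :=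
  ⨅ q : ℚ, if p.2 < q then p.1 (Iic (q : ℝ)) else ∞

lemma measurable_measureIic : Measurable measureIic :=
  Measurable.iInf fun _ => Measurable.ite (measurableSet_lt measurable_snd measurable_const)
    ((Measure.measurable_coe measurableSet_Iic).comp measurable_fst) measurable_const

lemma measureIic_apply (μ : Measure ℝ) [IsFiniteMeasure μ] (t : ℝ) :
    measureIic (μ, t) = μ (Iic t) := by
  rw [← iInf_rat_gt_measure_Iic, measureIic]
  simp_rw [← iInf_eq_if]
  rw [iInf_subtype']

lemma map_sub_const_apply_Iic (μ : Measure ℝ) [IsFiniteMeasure μ] (m t : ℝ) :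
    μ.map (fun x => x - m) (Iic t) = measureIic (μ, t + m) := by
  rw [measureIic_apply,
    Measure.map_apply (by fun_prop : Measurable fun x : ℝ => x - m) measurableSet_Iic]
  congr with x
  simp

lemma measurableSet_setOf_map_sub_measureMean_eq (ν : Measure ℝ) [IsFiniteMeasure ν] :
    MeasurableSet {μ : Measure ℝ | μ.map (fun x => x - measureMean μ) = ν} := by
  have hset : {μ : Measure ℝ | μ.map (fun x => x - measureMean μ) = ν} =
      {μ | μ univ = ν univ} ∩
        ⋂ q : ℚ, {μ | measureIic (μ, q + measureMean μ) = ν (Iic (q : ℝ))} := by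
    ext μ
    have hmass : μ.map (fun x => x - measureMean μ) univ = μ univ := by
      rw [Measure.map_apply (by fun_prop) .univ, preimage_univ]
    have hfinite (h : μ univ = ν univ) : IsFiniteMeasure μ := ⟨h ▸ measure_lt_top ν _⟩
    simp only [mem_ofPred_eq, mem_inter_iff, mem_iInter]
    constructor
    · intro h
      have hmassν : μ univ = ν univ := by rw [← hmass, h]
      have := hfinite hmassν
      exact ⟨hmassν, fun q => by rw [← map_sub_const_apply_Iic, h]⟩
    · rintro ⟨hmassν, hcdf⟩
      have := hfinite hmassν
      refine Measure.ext_of_Iic _ _ fun t => ?_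
      rw [← iInf_rat_gt_measure_Iic, ← iInf_rat_gt_measure_Iic]
      exact iInf_congr fun q => by rw [map_sub_const_apply_Iic, hcdf]
  rw [hset]
  refine (Measure.measurable_coe .univ (measurableSet_singleton _)).inter
    (.iInter fun q => ?_)
  exact (measurable_measureIic.comp (measurable_id.prodMk
    (measurable_const.add measurable_measureMean))) (measurableSet_singleton _)

def stayInUnitInterval (n : ℕ) : Set (Fin n → ℝ) :=
  {x | ∀ i ≤ n, |∑ k : Fin n with k.1 < i, x k| ≤ 1}

lemma measurableSet_stayInUnitInterval (n : ℕ) : MeasurableSet (stayInUnitInterval n) := by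
  simp only [stayInUnitInterval, ofPred_forall]
  exact .iInter fun i => .iInter fun _ => measurableSet_le (by fun_prop) measurable_const

lemma mem_stayInUnitInterval_iff {n : ℕ} (g : ℕ → ℝ) :
    (fun k : Fin n => g k) ∈ stayInUnitInterval n ↔
      ∀ i ≤ n, |∑ j ∈ Finset.range i, g j| ≤ 1 := by
  refine forall₂_congr fun i hi => ?_
  rw [Finset.sum_filter, Fin.sum_univ_eq_sum_range (fun j => if j < i then g j else 0),
    ← Finset.sum_filter]
  congr! 3
  ext j
  simp only [Finset.mem_filter, Finset.mem_range]
  omega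

def gaussianStayProb (n : ℕ) (v : ℝ≥0) (a : Fin n → ℝ) : ℝ :=
  (Measure.pi (fun _ : Fin n => gaussianReal 0 v) {z | z + a ∈ stayInUnitInterval n}).toReal

lemma measurable_gaussianStayProb (n : ℕ) (v : ℝ≥0) : Measurable (gaussianStayProb n v) :=
  (measurable_measure_prodMk_left ((measurableSet_stayInUnitInterval n).preimage
    (measurable_snd.add measurable_fst))).ennreal_toReal

lemma toReal_measure_add_mem_stayInUnitInterval {Ω : Type*} [MeasurableSpace Ω]
    {P : Measure Ω} {n : ℕ} {v : ℝ≥0} {Z : Ω → Fin n → ℝ} (hZ : Measurable Z)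
    (hlaw : P.map Z = Measure.pi fun _ => gaussianReal 0 v) (a : Fin n → ℝ) :
    (P {ω | Z ω + a ∈ stayInUnitInterval n}).toReal = gaussianStayProb n v a := by
  have hS : MeasurableSet {z | z + a ∈ stayInUnitInterval n} :=
    (measurableSet_stayInUnitInterval n).preimage (measurable_add_const a)
  rw [gaussianStayProb, ← hlaw, Measure.map_apply hZ hS]
  rfl

def gridIncrements {Ω : Type*} (B : ℝ → Ω → ℝ) (n : ℕ) (ω : Ω) (k : Fin n) : ℝ :=
  B ((((k : ℕ) + 1 : ℕ) : ℝ) / n) ω - B ((k : ℕ) / n) ω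

lemma IsStandardBM.measurable_smul_gridIncrements {Ω : Type*} [MeasurableSpace Ω]
    {P : Measure Ω} {B : ℝ → Ω → ℝ} (hB : IsStandardBM P B) (a : ℝ) (n : ℕ) :
    Measurable fun ω => a • gridIncrements B n ω :=
  measurable_pi_lambda _ fun _ => ((hB.1 _).sub (hB.1 _)).const_mul a

lemma IsStandardBM.map_smul_gridIncrements {Ω : Type*} [MeasurableSpace Ω] {P : Measure Ω}
    {B : ℝ → Ω → ℝ} (hB : IsStandardBM P B) (a : ℝ) (n : ℕ) :
    P.map (fun ω => a • gridIncrements B n ω) =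
      Measure.pi fun _ => gaussianReal 0 (a ^ 2 / n).toNNReal := by
  have hgrid : Monotone fun j : ℕ => (j : ℝ) / n := fun i j hij => by
    dsimp only
    gcongr
  have hincr : ∀ k : Fin n, Measurable fun ω => gridIncrements B n ω k :=
    fun k => (hB.1 _).sub (hB.1 _)
  refine map_fun_eq_pi_of_iIndepFun (fun k => (hincr k).const_mul a)
    ((hB.2.2.2.1 n _ hgrid (by positivity)).comp (fun _ x => a * x)
      fun _ => measurable_id.const_mul a) fun k => ?_
  have hstep : (((k : ℕ) + 1 : ℕ) : ℝ) / n - ((k : ℕ) : ℝ) / n = 1 / n := by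
    push_cast
    ring
  calc P.map (fun ω => a * gridIncrements B n ω k)
      = (P.map fun ω => gridIncrements B n ω k).map (a * ·) :=
        (Measure.map_map (measurable_id.const_mul a) (hincr k)).symm
    _ = gaussianReal 0 (a ^ 2 / n).toNNReal := by
        simp only [gridIncrements]
        rw [hB.2.2.2.2 _ _ (by positivity) (hgrid (Nat.le_succ k)), hstep,
          gaussianReal_map_const_mul_toNNReal, mul_one_div]

lemma smul_gridIncrements_add_smul_gridIncrements {Ω Ω' : Type*} (B : ℝ → Ω → ℝ)
    (W : ℝ → Ω' → ℝ) (a b : ℝ) (n : ℕ) (ω : Ω) (ω' : Ω') :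
    a • gridIncrements B n ω + b • gridIncrements W n ω' = fun k : Fin n =>
      (a * B ((((k : ℕ) + 1 : ℕ) : ℝ) / n) ω + b * W ((((k : ℕ) + 1 : ℕ) : ℝ) / n) ω') -
        (a * B ((k : ℕ) / n) ω + b * W ((k : ℕ) / n) ω') := by
  ext k
  simp only [gridIncrements, Pi.add_apply, Pi.smul_apply, smul_eq_mul]
  ring

/-- For fixed `ωW`, the event says that the steps `σ₂ • gridIncrements B n` shifted by
`σ₁ • gridIncrements W n ωW` stay in the unit interval. -/
lemma IsStandardBM.map_toReal_measure_abs_add_le_one {Ω Ω' : Type*}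
    [MeasurableSpace Ω] [MeasurableSpace Ω']
    {PB : Measure Ω} {PW : Measure Ω'}
    {B : ℝ → Ω → ℝ} {W : ℝ → Ω' → ℝ} (hB : IsStandardBM PB B) (hW : IsStandardBM PW W)
    (σ₁ σ₂ : ℝ) (n : ℕ) :
    PW.map (fun ωW =>
        (PB {ωB | ∀ i ≤ n, |σ₂ * B ((i : ℝ) / n) ωB + σ₁ * W ((i : ℝ) / n) ωW| ≤ 1}).toReal) =
      (Measure.pi fun _ : Fin n => gaussianReal 0 (σ₁ ^ 2 / n).toNNReal).map
        (gaussianStayProb n (σ₂ ^ 2 / n).toNNReal) := by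
  have hcond : (fun ωW =>
      (PB {ωB | ∀ i ≤ n, |σ₂ * B ((i : ℝ) / n) ωB + σ₁ * W ((i : ℝ) / n) ωW| ≤ 1}).toReal) =
      gaussianStayProb n (σ₂ ^ 2 / n).toNNReal ∘ fun ωW => σ₁ • gridIncrements W n ωW := by
    ext ωW
    rw [Function.comp_apply, ← toReal_measure_add_mem_stayInUnitInterval
      (hB.measurable_smul_gridIncrements σ₂ n) (hB.map_smul_gridIncrements σ₂ n)]
    congr with ωB
    let g : ℕ → ℝ := fun j => σ₂ * B (j / n) ωB + σ₁ * W (j / n) ωW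
    rw [smul_gridIncrements_add_smul_gridIncrements]
    refine Iff.trans ?_ (mem_stayInUnitInterval_iff fun j => g (j + 1) - g j).symm
    refine forall₂_congr fun i _ => ?_
    rw [Finset.sum_range_sub g]
    simp [g, hB.2.1, hW.2.1]
  rw [hcond, ← Measure.map_map (measurable_gaussianStayProb _ _)
    (hW.measurable_smul_gridIncrements σ₁ n), hW.map_smul_gridIncrements]

namespace RWre

variable {Ωe Ωq : Type*} [MeasurableSpace Ωe] [MeasurableSpace Ωq] (R : RWre Ωe Ωq)

def HasCenteredStepLaw (ν : Measure ℝ) : Prop :=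
  ∀ᵐ ωe ∂ R.Pe, (R.Pq ωe).map (fun ωq => R.S 1 ωq - R.M 1 ωe) = ν

lemma ae_map_env_zero_sub_M_one {ν : Measure ℝ} (hU : R.HasCenteredStepLaw ν) :
    ∀ᵐ ωe ∂ R.Pe, (R.env 0 ωe).map (fun x => x - R.M 1 ωe) = ν := by
  filter_upwards [hU] with ωe h
  rw [← R.quenchedLaw 0 ωe, Measure.map_map (by fun_prop) (R.measX 0), ← h]
  congr with ωq
  simp [S]

variable {R} {v : ℝ≥0}

lemma ae_measureMean_env_zero (hU : R.HasCenteredStepLaw (gaussianReal 0 v)) :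
    ∀ᵐ ωe ∂ R.Pe, measureMean (R.env 0 ωe) = R.M 1 ωe := by
  filter_upwards [R.ae_map_env_zero_sub_M_one hU] with ωe h
  have := R.probEnv 0 ωe
  exact measureMean_eq_of_map_sub_eq_gaussianReal h

/-- Transported from `k = 0` along `R.envIdent k`, which needs the measurability of the
set of such laws. -/
lemma ae_map_env_sub_measureMean (hU : R.HasCenteredStepLaw (gaussianReal 0 v)) (k : ℕ) :
    ∀ᵐ ωe ∂ R.Pe,
      (R.env k ωe).map (fun x => x - measureMean (R.env k ωe)) = gaussianReal 0 v := by
  have hset := measurableSet_setOf_map_sub_measureMean_eq (gaussianReal 0 v)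
  have h0 : ∀ᵐ μ ∂ R.Pe.map (R.env 0),
      μ.map (fun x => x - measureMean μ) = gaussianReal 0 v := by
    rw [ae_map_iff (R.measEnv 0).aemeasurable hset]
    filter_upwards [R.ae_map_env_zero_sub_M_one hU, ae_measureMean_env_zero hU]
      with ωe h hmean
    rwa [hmean]
  rwa [← R.envIdent k, ae_map_iff (R.measEnv k).aemeasurable hset] at h0

lemma map_measureMean_env (hU : R.HasCenteredStepLaw (gaussianReal 0 v))
    {ν : Measure ℝ} (hM : R.Pe.map (R.M 1) = ν) (k : ℕ) :
    R.Pe.map (fun ωe => measureMean (R.env k ωe)) = ν :=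
  calc R.Pe.map (fun ωe => measureMean (R.env k ωe))
      = (R.Pe.map (R.env k)).map measureMean :=
        (Measure.map_map measurable_measureMean (R.measEnv k)).symm
    _ = R.Pe.map (fun ωe => measureMean (R.env 0 ωe)) := by
        rw [R.envIdent k, Measure.map_map measurable_measureMean (R.measEnv 0)]
        rfl
    _ = R.Pe.map (R.M 1) := Measure.map_congr (ae_measureMean_env_zero hU)
    _ = ν := hM

lemma map_smul_measureMean_env {s₁ s₂ : ℝ}
    (hU : R.HasCenteredStepLaw (gaussianReal 0 s₂.toNNReal))
    (hM : R.Pe.map (R.M 1) = gaussianReal 0 s₁.toNNReal) (c : ℝ) (n : ℕ) :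
    R.Pe.map (fun ωe => c • fun k : Fin n => measureMean (R.env k ωe)) =
      Measure.pi fun _ => gaussianReal 0 (c ^ 2 * s₁).toNNReal := by
  have hmeas (k : Fin n) : Measurable fun ωe => measureMean (R.env k ωe) :=
    measurable_measureMean.comp (R.measEnv k)
  refine map_fun_eq_pi_of_iIndepFun (fun k => (hmeas k).const_mul c)
    ((R.envIndep.precomp Fin.val_injective).comp (fun _ μ => c * measureMean μ)
      fun _ => measurable_measureMean.const_mul c) fun k => ?_
  calc R.Pe.map (fun ωe => c * measureMean (R.env k ωe))
      = (R.Pe.map fun ωe => measureMean (R.env k ωe)).map (c * ·) :=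
        (Measure.map_map (measurable_id.const_mul c) (hmeas k)).symm
    _ = gaussianReal 0 (c ^ 2 * s₁).toNNReal := by
        rw [map_measureMean_env hU hM, gaussianReal_map_const_mul_toNNReal]

lemma ae_map_smul_centered_steps {s₂ : ℝ}
    (hU : R.HasCenteredStepLaw (gaussianReal 0 s₂.toNNReal)) (c : ℝ) (n : ℕ) :
    ∀ᵐ ωe ∂ R.Pe, (R.Pq ωe).map
        (fun ωq => c • fun k : Fin n => R.X k ωq - measureMean (R.env k ωe)) =
      Measure.pi fun _ => gaussianReal 0 (c ^ 2 * s₂).toNNReal := by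
  filter_upwards [ae_all_iff.2 fun k : Fin n => ae_map_env_sub_measureMean hU k] with ωe h
  refine map_fun_eq_pi_of_iIndepFun (fun k : Fin n => ((R.measX k).sub_const _).const_mul c)
    (((R.quenchedIndep ωe).precomp Fin.val_injective).comp
      (fun k x => c * (x - measureMean (R.env k ωe))) fun _ => by fun_prop) fun k => ?_
  calc (R.Pq ωe).map (fun ωq => c * (R.X k ωq - measureMean (R.env k ωe)))
      = (((R.Pq ωe).map (R.X k)).map fun x => x - measureMean (R.env k ωe)).map (c * ·) := by
        have hcenter : Measurable fun x : ℝ => x - measureMean (R.env k ωe) := by fun_prop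
        rw [Measure.map_map hcenter (R.measX k),
          Measure.map_map (by fun_prop) (hcenter.comp (R.measX k))]
        rfl
    _ = gaussianReal 0 (c ^ 2 * s₂).toNNReal := by
        rw [R.quenchedLaw, h k, gaussianReal_map_const_mul_toNNReal]

/-- Given the environment, `c • S` is the walk with the centered steps
`c • (X k - measureMean (env k))` and the deterministic steps `c • measureMean (env k)`. -/
lemma ae_toReal_quenched_measure_eq {s₂ : ℝ}
    (hU : R.HasCenteredStepLaw (gaussianReal 0 s₂.toNNReal)) (c : ℝ) (n : ℕ) :
    ∀ᵐ ωe ∂ R.Pe, (R.Pq ωe {ωq | ∀ i ≤ n, |c * R.S i ωq| ≤ 1}).toReal =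
      gaussianStayProb n (c ^ 2 * s₂).toNNReal
        (c • fun k : Fin n => measureMean (R.env k ωe)) := by
  filter_upwards [ae_map_smul_centered_steps hU c n] with ωe hlaw
  have hmeas :
      Measurable fun ωq => c • fun k : Fin n => R.X k ωq - measureMean (R.env k ωe) :=
    measurable_pi_lambda _ fun k => ((R.measX k).sub_const _).const_mul c
  rw [← toReal_measure_add_mem_stayInUnitInterval hmeas hlaw]
  congr with ωq
  have hsteps : ((c • fun k : Fin n => R.X k ωq - measureMean (R.env k ωe)) +
      c • fun k : Fin n => measureMean (R.env k ωe)) = fun k : Fin n => c * R.X k ωq := by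
    ext k
    simp only [Pi.add_apply, Pi.smul_apply, smul_eq_mul]
    ring
  rw [hsteps]
  refine Iff.trans ?_ (mem_stayInUnitInterval_iff fun j => c * R.X j ωq).symm
  simp only [S, Finset.mul_sum]

lemma map_toReal_quenched_measure {s₁ s₂ : ℝ}
    (hU : R.HasCenteredStepLaw (gaussianReal 0 s₂.toNNReal))
    (hM : R.Pe.map (R.M 1) = gaussianReal 0 s₁.toNNReal) (c : ℝ) (n : ℕ) :
    R.Pe.map (fun ωe => (R.Pq ωe {ωq | ∀ i ≤ n, |c * R.S i ωq| ≤ 1}).toReal) =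
      (Measure.pi fun _ : Fin n => gaussianReal 0 (c ^ 2 * s₁).toNNReal).map
        (gaussianStayProb n (c ^ 2 * s₂).toNNReal) := by
  have hmeas : Measurable fun ωe => c • fun k : Fin n => measureMean (R.env k ωe) :=
    measurable_pi_lambda _ fun k => (measurable_measureMean.comp (R.measEnv k)).const_mul c
  rw [Measure.map_congr (ae_toReal_quenched_measure_eq hU c n),
    ← map_smul_measureMean_env hU hM, Measure.map_map (measurable_gaussianStayProb _ _) hmeas]
  rfl

end RWre

theorem binormal_rwre_identity_general
    {Ωe Ωq ΩB ΩW : Type*} [MeasurableSpace Ωe] [MeasurableSpace Ωq]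
    [MeasurableSpace ΩB] [MeasurableSpace ΩW]
    (R : RWre Ωe Ωq)
    (σ₁ σ₂ : ℝ)
    (hMgauss : R.Pe.map (R.M 1) = gaussianReal 0 (Real.toNNReal (σ₁ ^ 2)))
    (hUgauss : ∀ᵐ ωe ∂ R.Pe,
      (R.Pq ωe).map (fun ωq => R.S 1 ωq - R.M 1 ωe) = gaussianReal 0 (Real.toNNReal (σ₂ ^ 2)))
    (PB : Measure ΩB) (PW : Measure ΩW)
    (B : ℝ → ΩB → ℝ) (W : ℝ → ΩW → ℝ)
    (hB : IsStandardBM PB B) (hW : IsStandardBM PW W) :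
    ∀ n : ℕ, 1 ≤ n →
      R.Pe.map (fun ωe =>
          (R.Pq ωe {ωq | ∀ i ≤ n, |(n : ℝ) ^ (-(1:ℝ)/2) * R.S i ωq| ≤ 1}).toReal) =
      PW.map (fun ωW =>
          (PB {ωB | ∀ i ≤ n, |σ₂ * B ((i : ℝ) / n) ωB + σ₁ * W ((i : ℝ) / n) ωW| ≤ 1}).toReal) := by
  intro n _
  have hc : ((n : ℝ) ^ (-(1 : ℝ) / 2)) ^ 2 = (n : ℝ)⁻¹ := by
    rw [← Real.rpow_natCast, ← Real.rpow_mul (Nat.cast_nonneg n)]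
    norm_num [Real.rpow_neg_one]
  rw [RWre.map_toReal_quenched_measure hUgauss hMgauss,
    IsStandardBM.map_toReal_measure_abs_add_le_one hB hW, hc, inv_mul_eq_div, inv_mul_eq_div]

/-- **The bi-normal RWre example.** If the quenched mean `M₁` is `N(0, σ₁²)`-distributed and,
for `P`-almost every environment, `S₁ - E_μ S₁` is `N(0, σ₂²)`-distributed under the quenched
law, then for every `n ≥ 1` the random variable `P_μ(max_{i ≤ n} |n^{-1/2} Sᵢ| ≤ 1)` has the
same distribution as `P(max_{i ≤ n} |σ₂ B_{i/n} + σ₁ W_{i/n}| ≤ 1 | W)`, where `B, W` are two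
independent standard Brownian motions. -/
theorem binormal_rwre_identity
    {Ωe Ωq ΩB ΩW : Type*} [MeasurableSpace Ωe] [MeasurableSpace Ωq]
    [MeasurableSpace ΩB] [MeasurableSpace ΩW]
    (R : RWre Ωe Ωq)
    (σ₁ σ₂ : ℝ) (hσ₁ : 0 < σ₁) (hσ₂ : 0 < σ₂)
    (hMgauss : R.Pe.map (R.M 1) = gaussianReal 0 (Real.toNNReal (σ₁ ^ 2)))
    (hUgauss : ∀ᵐ ωe ∂ R.Pe,
      (R.Pq ωe).map (fun ωq => R.S 1 ωq - R.M 1 ωe) = gaussianReal 0 (Real.toNNReal (σ₂ ^ 2)))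
    (PB : Measure ΩB) (PW : Measure ΩW)
    (hPB : IsProbabilityMeasure PB) (hPW : IsProbabilityMeasure PW)
    (B : ℝ → ΩB → ℝ) (W : ℝ → ΩW → ℝ)
    (hB : IsStandardBM PB B) (hW : IsStandardBM PW W) :
    ∀ n : ℕ, 1 ≤ n →
      R.Pe.map (fun ωe =>
          (R.Pq ωe {ωq | ∀ i ≤ n, |(n : ℝ) ^ (-(1:ℝ)/2) * R.S i ωq| ≤ 1}).toReal) =
      PW.map (fun ωW =>
          (PB {ωB | ∀ i ≤ n, |σ₂ * B ((i : ℝ) / n) ωB + σ₁ * W ((i : ℝ) / n) ωW| ≤ 1}).toReal) :=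
  binormal_rwre_identity_general R σ₁ σ₂ hMgauss hUgauss PB PW B W hB hW
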